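/- The bias bound in Proposition 1 is tight up to constants in the following sense: for any γ ∈ (0,1] there exist a distribution of x with centered covariance having smallest eigenvalue γ² and a bias function b with |b(x)| ≤ δ such that the population least squares slope error satisfies ||β̂_{1:p} - β̄_{1:p}||₂ ≥ c·δ/γ for an absolute constant c > 0. -/

import Mathlib

/-!
Take `p = 1` and `x` uniform on `{γ, -γ}`, so the centered covariance is exactly `γ²`. The bias
`b x = max (-δ) (min δ ((δ / γ) x))` is bounded by `δ` but agrees with the linear function
`(δ / γ) x` on the support of `x`. Hence for `β̄ = 0` the slope `β̂ = δ / γ` has zero residual, so it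
is a least squares solution, and its slope error is `δ / γ`.
-/

open MeasureTheory

open scoped ENNReal RealInnerProductSpace

section SymmetricTwoPoint

variable {E : Type*} [NormedAddCommGroup E] [MeasurableSpace E] [MeasurableSingletonClass E]

noncomputable def symmDirac (a : E) : Measure E :=
  (2⁻¹ : ℝ≥0∞) • (Measure.dirac a + Measure.dirac (-a))

instance (a : E) : IsProbabilityMeasure (symmDirac a) :=
  ⟨by simp [symmDirac, ← two_mul, ENNReal.mul_inv_cancel two_ne_zero ENNReal.ofNat_ne_top]⟩

theorem integral_symmDirac {F : Type*} [NormedAddCommGroup F] [NormedSpace ℝ F]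
    [CompleteSpace F] (f : E → F) (a : E) :
    ∫ x, f x ∂symmDirac a = (2⁻¹ : ℝ) • (f a + f (-a)) := by
  rw [symmDirac, integral_smul_measure, integral_add_measure (integrable_dirac (by simp))
    (integrable_dirac (by simp)), integral_dirac, integral_dirac]
  norm_num

variable [NormedSpace ℝ E] [CompleteSpace E]

theorem integral_id_symmDirac (a : E) : ∫ x, x ∂symmDirac a = 0 := by
  simp [integral_symmDirac]

end SymmetricTwoPoint

theorem integral_inner_sub_mean_sq_symmDirac {E : Type*} [NormedAddCommGroup E]
    [InnerProductSpace ℝ E] [CompleteSpace E] [MeasurableSpace E] [MeasurableSingletonClass E]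
    (v a : E) : ∫ x, ⟪v, x - ∫ x', x' ∂symmDirac a⟫ ^ 2 ∂symmDirac a = ⟪v, a⟫ ^ 2 := by
  rw [integral_id_symmDirac, integral_symmDirac]
  simp only [sub_zero, inner_neg_right, neg_sq, smul_eq_mul]
  ring

theorem inner_single_sq_of_norm_eq_one {v : EuclideanSpace ℝ (Fin 1)} (hv : ‖v‖ = 1) (t : ℝ) :
    ⟪v, EuclideanSpace.single 0 t⟫ ^ 2 = t ^ 2 := by
  have hv0 : v 0 ^ 2 = 1 := by
    simpa [EuclideanSpace.norm_eq, Real.sqrt_eq_one, Fin.sum_univ_one] using hv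
  simp [EuclideanSpace.inner_single_right, mul_pow, hv0]

theorem abs_max_neg_min_le {δ : ℝ} (hδ : 0 ≤ δ) (t : ℝ) : |max (-δ) (min δ t)| ≤ δ :=
  abs_le.2 ⟨le_max_left _ _, max_le (by linarith) (min_le_left _ _)⟩

/-- Tightness of the bias bound: there is an absolute constant `c > 0` such that for any
`γ ∈ (0,1]` and `δ > 0` there are a distribution of `x` whose centered covariance has
smallest eigenvalue `γ²`, a bias `b` with `|b(x)| ≤ δ`, and a population least squares
solution whose slope error is at least `c·δ/γ`. -/
theorem stmt_3 :
    ∃ c : ℝ, 0 < c ∧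
      ∀ γ δ : ℝ, 0 < γ → γ ≤ 1 → 0 < δ →
        ∃ (p : ℕ) (μ : Measure (EuclideanSpace ℝ (Fin p)))
          (_ : IsProbabilityMeasure μ)
          (b : EuclideanSpace ℝ (Fin p) → ℝ)
          (bbar1 : EuclideanSpace ℝ (Fin p)) (bbar0 : ℝ)
          (bhat1 : EuclideanSpace ℝ (Fin p)) (bhat0 : ℝ),
          -- the bias is uniformly bounded by δ
          (∀ x, |b x| ≤ δ) ∧
          -- γ² is the smallest eigenvalue of the centered covariance matrix of x
          (∀ v : EuclideanSpace ℝ (Fin p), ‖v‖ = 1 →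
            γ ^ 2 ≤ ∫ x, (inner ℝ v (x - ∫ x', x' ∂μ) : ℝ) ^ 2 ∂μ) ∧
          (∃ v : EuclideanSpace ℝ (Fin p), ‖v‖ = 1 ∧
            γ ^ 2 = ∫ x, (inner ℝ v (x - ∫ x', x' ∂μ) : ℝ) ^ 2 ∂μ) ∧
          -- β̂ is the population least squares solution for y = xᵀβ̄ + β̄₀ + b(x)
          (∀ (β₁ : EuclideanSpace ℝ (Fin p)) (β₀ : ℝ),
            ∫ x, ((inner ℝ x bhat1 : ℝ) + bhat0 -
                ((inner ℝ x bbar1 : ℝ) + bbar0 + b x)) ^ 2 ∂μ ≤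
              ∫ x, ((inner ℝ x β₁ : ℝ) + β₀ -
                ((inner ℝ x bbar1 : ℝ) + bbar0 + b x)) ^ 2 ∂μ) ∧
          -- the slope error is at least c·δ/γ
          c * δ / γ ≤ ‖bhat1 - bbar1‖ := by
  refine ⟨1, one_pos, fun γ δ hγ _ hδ => ?_⟩
  let a := EuclideanSpace.single (0 : Fin 1) γ
  let β := EuclideanSpace.single (0 : Fin 1) (δ / γ)
  have hβa : ⟪a, β⟫ = δ := by
    simp only [a, β, EuclideanSpace.inner_single_left, PiLp.single_eq_same, Real.ringHom_apply]
    field_simp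
  let b x := max (-δ) (min δ ⟪x, β⟫)
  refine ⟨1, symmDirac a, inferInstance, b, 0, 0, β, 0, fun x => abs_max_neg_min_le hδ.le _,
    fun v hv => ?_, ⟨EuclideanSpace.single 0 1, by simp, ?_⟩, fun β₁ β₀ => ?_, ?_⟩
  · rw [integral_inner_sub_mean_sq_symmDirac, inner_single_sq_of_norm_eq_one hv]
  · rw [integral_inner_sub_mean_sq_symmDirac, inner_single_sq_of_norm_eq_one (by simp)]
  · have hfit : ∫ x, (⟪x, β⟫ + 0 - (⟪x, (0 : EuclideanSpace ℝ (Fin 1))⟫ + 0 + b x)) ^ 2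
        ∂symmDirac a = 0 := by
      simp [integral_symmDirac, b, hβa, inner_neg_left, hδ.le]
    rw [hfit]
    exact integral_nonneg fun _ => sq_nonneg _
  · simp [β, abs_of_pos hδ, abs_of_pos hγ]
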